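/- arXiv:1311.0210 — 5 statements merged into one kernel-verified Lean document; each statement's English description precedes it below -/
import Mathlib

section
/- Under the map (x,y,z) ↦ (m_11·x/(1+m_03·z), m_22·y/(1+m_03·z), (m_30+m_33·z)/(1+m_03·z)), the unit sphere x²+y²+z²=1 is mapped onto the ellipsoid X²/a_x² + Y²/a_y² + (Z-z_c)²/a_z² = 1, where a_x = |m_11|/√(1-m_03²), a_y = |m_22|/√(1-m_03²), a_z = |m_33 - m_03m_30|/(1-m_03²), and z_c = (m_30 - m_03m_33)/(1-m_03²). -/
/-!
On the sphere the map factors as the action `boost m₀₃` of the Lorentz boost of velocity `m₀₃`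
on null directions `(1, x, y, z)`, followed by the axis-parallel affine map
`(u, v, t) ↦ (a_x u, a_y v, z_c + a_z t)` with signed semi-axes `m₁₁ / √(1 - m₀₃²)`,
`m₂₂ / √(1 - m₀₃²)`, `(m₃₃ - m₀₃ m₃₀) / (1 - m₀₃²)`. The boost maps the sphere onto itself,
since `boost (-c)` inverts `boost c`, and the affine map sends the sphere onto the ellipsoid.
-/

open Set

def unitSphere : Set (ℝ × ℝ × ℝ) := {p | p.1 ^ 2 + p.2.1 ^ 2 + p.2.2 ^ 2 = 1}

noncomputable def boost (c : ℝ) (p : ℝ × ℝ × ℝ) : ℝ × ℝ × ℝ :=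
  (√(1 - c ^ 2) * p.1 / (1 + c * p.2.2), √(1 - c ^ 2) * p.2.1 / (1 + c * p.2.2),
    (p.2.2 + c) / (1 + c * p.2.2))

def axisScale (a b c t : ℝ) (p : ℝ × ℝ × ℝ) : ℝ × ℝ × ℝ :=
  (a * p.1, b * p.2.1, t + c * p.2.2)

lemma one_sub_sq_pos {c : ℝ} (hc : |c| < 1) : 0 < 1 - c ^ 2 := by
  nlinarith [abs_nonneg c, sq_abs c]

lemma one_add_mul_pos_of_mem_unitSphere {c : ℝ} {p : ℝ × ℝ × ℝ} (hc : |c| < 1)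
    (hp : p ∈ unitSphere) : 0 < 1 + c * p.2.2 := by
  have hz : |p.2.2| ≤ 1 := by
    rw [← sq_le_one_iff_abs_le_one]
    have hp' : p.1 ^ 2 + p.2.1 ^ 2 + p.2.2 ^ 2 = 1 := hp
    nlinarith [sq_nonneg p.1, sq_nonneg p.2.1]
  have : |c * p.2.2| < 1 := by
    rw [abs_mul]
    exact (mul_le_of_le_one_right (abs_nonneg c) hz).trans_lt hc
  linarith [neg_abs_le (c * p.2.2)]

lemma boost_mem_unitSphere {c : ℝ} {p : ℝ × ℝ × ℝ} (hc : |c| < 1) (hp : p ∈ unitSphere) :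
    boost c p ∈ unitSphere := by
  have hw := (one_add_mul_pos_of_mem_unitSphere hc hp).ne'
  have hp' : p.1 ^ 2 + p.2.1 ^ 2 + p.2.2 ^ 2 = 1 := hp
  simp only [unitSphere, boost, mem_ofPred_eq, div_pow, mul_pow,
    Real.sq_sqrt (one_sub_sq_pos hc).le]
  field_simp
  linear_combination (1 - c ^ 2) * hp'

lemma boost_neg_boost {c : ℝ} {p : ℝ × ℝ × ℝ} (hc : |c| < 1) (hw : 1 + c * p.2.2 ≠ 0) :
    boost (-c) (boost c p) = p := by
  obtain ⟨x, y, z⟩ := p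
  dsimp only at hw
  have hs := (one_sub_sq_pos hc).ne'
  have hss : √(1 - c ^ 2) ^ 2 = 1 - c ^ 2 := Real.sq_sqrt (one_sub_sq_pos hc).le
  have hw' : 1 + -c * ((z + c) / (1 + c * z)) = (1 - c ^ 2) / (1 + c * z) := by
    field_simp
    ring
  simp only [boost, neg_sq, hw']
  refine Prod.ext ?_ (Prod.ext ?_ ?_) <;> field_simp
  · rw [hss]
  · rw [hss]
  · rw [mul_comm z c]
    field_simp
    ring

lemma image_boost_unitSphere {c : ℝ} (hc : |c| < 1) : boost c '' unitSphere = unitSphere := by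
  refine (MapsTo.image_subset fun p hp => boost_mem_unitSphere hc hp).antisymm fun q hq => ?_
  have hc' : |-c| < 1 := by rwa [abs_neg]
  refine ⟨boost (-c) q, boost_mem_unitSphere hc' hq, ?_⟩
  simpa using boost_neg_boost hc' (one_add_mul_pos_of_mem_unitSphere hc' hq).ne'

lemma image_axisScale_unitSphere {a b c : ℝ} (t : ℝ) (ha : a ≠ 0) (hb : b ≠ 0) (hc : c ≠ 0) :
    axisScale a b c t '' unitSphere =
      {q | q.1 ^ 2 / a ^ 2 + q.2.1 ^ 2 / b ^ 2 + (q.2.2 - t) ^ 2 / c ^ 2 = 1} := by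
  ext ⟨X, Y, Z⟩
  simp only [mem_image, mem_ofPred_eq, unitSphere, axisScale, Prod.exists, Prod.mk.injEq]
  constructor
  · rintro ⟨x, y, z, hp, rfl, rfl, rfl⟩
    field_simp
    linear_combination c ^ 2 * hp
  · intro hq
    refine ⟨X / a, Y / b, (Z - t) / c, ?_, ?_, ?_, ?_⟩
    · simpa only [div_pow] using hq
    all_goals field_simp
    ring

theorem stmt_6 (m03 m11 m22 m30 m33 : ℝ) (h03 : |m03| < 1)
    (h11 : m11 ≠ 0) (h22 : m22 ≠ 0) (h33 : m33 - m03 * m30 ≠ 0) :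
    (fun p : ℝ × ℝ × ℝ =>
        (m11 * p.1 / (1 + m03 * p.2.2), m22 * p.2.1 / (1 + m03 * p.2.2),
          (m30 + m33 * p.2.2) / (1 + m03 * p.2.2))) ''
        {p : ℝ × ℝ × ℝ | p.1 ^ 2 + p.2.1 ^ 2 + p.2.2 ^ 2 = 1} =
      {q : ℝ × ℝ × ℝ |
        q.1 ^ 2 / (|m11| / Real.sqrt (1 - m03 ^ 2)) ^ 2 +
          q.2.1 ^ 2 / (|m22| / Real.sqrt (1 - m03 ^ 2)) ^ 2 +
          (q.2.2 - (m30 - m03 * m33) / (1 - m03 ^ 2)) ^ 2 /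
            (|m33 - m03 * m30| / (1 - m03 ^ 2)) ^ 2 = 1} := by
  have hs := one_sub_sq_pos h03
  have hsqrt := Real.sqrt_pos.mpr hs
  set f := axisScale (m11 / √(1 - m03 ^ 2)) (m22 / √(1 - m03 ^ 2))
    ((m33 - m03 * m30) / (1 - m03 ^ 2)) ((m30 - m03 * m33) / (1 - m03 ^ 2))
  have hfactor : EqOn (fun p : ℝ × ℝ × ℝ =>
      (m11 * p.1 / (1 + m03 * p.2.2), m22 * p.2.1 / (1 + m03 * p.2.2),
        (m30 + m33 * p.2.2) / (1 + m03 * p.2.2))) (f ∘ boost m03) unitSphere := by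
    intro p hp
    have hw := (one_add_mul_pos_of_mem_unitSphere h03 hp).ne'
    rw [mul_comm] at hw
    simp only [f, Function.comp, axisScale, boost]
    refine Prod.ext ?_ (Prod.ext ?_ ?_) <;> field_simp
    ring
  calc _ = (f ∘ boost m03) '' unitSphere := hfactor.image_eq
    _ = f '' unitSphere := by rw [image_comp, image_boost_unitSphere h03]
    _ = _ := by
      rw [image_axisScale_unitSphere _ (div_ne_zero h11 hsqrt.ne')
        (div_ne_zero h22 hsqrt.ne') (div_ne_zero h33 hs.ne')]
      simp only [div_pow, sq_abs]
end

section
/- If ω is a rank-two positive operator on ℂ² written as a convex combination ω = λω₁ + (1-λ)ω₂ of rank-one positive operators with 0 < λ < 1, and ρ₁, ρ₂, ρ are the normalized conditional states of system A obtained from measurement elements ω₁, ω₂, ω on a bipartite state ρ_AB, then ρ = μρ₁ + (1-μ)ρ₂ for some 0 ≤ μ ≤ 1, and by strict concavity of von Neumann entropy, the average conditional entropy using {ω₁, ω₂} is at most that using {ω}; hence an optimal POVM minimizing average conditional output entropy may be taken to consist of rank-one elements. -/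
open Matrix Complex ComplexOrder

/-- von Neumann entropy of a qubit density matrix (via its eigenvalues). -/
noncomputable def vN (ρ : Matrix (Fin 2) (Fin 2) ℂ) : ℝ :=
  if h : ρ.IsHermitian then ∑ i, Real.negMulLog (h.eigenvalues i) else 0

/-- The operator `1 ⊗ P` on the two-qubit Hilbert space. -/
def idKron (P : Matrix (Fin 2) (Fin 2) ℂ) :
    Matrix (Fin 2 × Fin 2) (Fin 2 × Fin 2) ℂ :=
  Matrix.of fun p q => (if p.1 = q.1 then 1 else 0) * P p.2 q.2

/-- The unnormalized conditional state `Tr_B[(1 ⊗ P) ρ_AB]` of system A. -/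
noncomputable def condOp (ρAB : Matrix (Fin 2 × Fin 2) (Fin 2 × Fin 2) ℂ)
    (P : Matrix (Fin 2) (Fin 2) ℂ) : Matrix (Fin 2) (Fin 2) ℂ :=
  Matrix.of fun a c => ∑ b, (idKron P * ρAB) (a, b) (c, b)

/-- The probability `Tr[(1 ⊗ P) ρ_AB]` of the measurement element `P`. -/
noncomputable def condProb (ρAB : Matrix (Fin 2 × Fin 2) (Fin 2 × Fin 2) ℂ)
    (P : Matrix (Fin 2) (Fin 2) ℂ) : ℝ :=
  ((idKron P * ρAB).trace).re

/-!
Both the unnormalized conditional state `condOp ρAB P` and the probability `condProb ρAB P` are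
linear in `P`, so splitting `ω = λ ω₁ + (1 - λ) ω₂` splits the conditional state of `ω` into the
mixture of those of `ω₁` and `ω₂` with weights `μ = λ p₁ / p` and `1 - μ = (1 - λ) p₂ / p`.
Multiplying concavity of the entropy, `μ S(ρ₁) + (1 - μ) S(ρ₂) ≤ S(ρ)`, by `p` gives the claim.
On a qubit `S(ρ) = H((1 + r) / 2)` with `H` the binary entropy and `r` the length of the Bloch
vector of `ρ`; `H((1 + r) / 2)` is concave and decreasing in `r ∈ [0, 1]` and `r` is convex in `ρ`
by the triangle inequality, which gives concavity of `S`.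
-/

open Real (binEntropy)

def qubitStates : Set (Matrix (Fin 2) (Fin 2) ℂ) := {ρ | ρ.PosSemidef ∧ ρ.trace = 1}

section ConditionalStates

variable (ρAB : Matrix (Fin 2 × Fin 2) (Fin 2 × Fin 2) ℂ)

lemma condOp_apply (P : Matrix (Fin 2) (Fin 2) ℂ) (a c : Fin 2) :
    condOp ρAB P a c = ∑ b, ∑ b', P b b' * ρAB (a, b') (c, b) := by
  simp [condOp, idKron, mul_apply, Fintype.sum_prod_type, ite_mul]

lemma condOp_add (P Q : Matrix (Fin 2) (Fin 2) ℂ) :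
    condOp ρAB (P + Q) = condOp ρAB P + condOp ρAB Q := by
  ext a c
  simp [condOp_apply, add_mul, Finset.sum_add_distrib]

lemma condOp_smul (z : ℂ) (P : Matrix (Fin 2) (Fin 2) ℂ) :
    condOp ρAB (z • P) = z • condOp ρAB P := by
  ext a c
  simp [condOp_apply]
  ring

lemma condProb_eq_re_trace_condOp (P : Matrix (Fin 2) (Fin 2) ℂ) :
    condProb ρAB P = (condOp ρAB P).trace.re := by
  simp [condProb, condOp, trace, Fintype.sum_prod_type]

/-- The operator `1 ⊗ vᵀ : ℂ² ⊗ ℂ² → ℂ²`. -/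
def idKronRow (v : Fin 2 → ℂ) : Matrix (Fin 2) (Fin 2 × Fin 2) ℂ :=
  Matrix.of fun a q => if a = q.1 then v q.2 else 0

lemma condOp_conjTranspose_mul_self (A : Matrix (Fin 2) (Fin 2) ℂ) :
    condOp ρAB (Aᴴ * A) = ∑ k, idKronRow (A k) * ρAB * (idKronRow (A k))ᴴ := by
  ext a c
  fin_cases a <;> fin_cases c <;>
    simp [condOp_apply, idKronRow, Matrix.sum_apply, mul_apply, Fintype.sum_prod_type] <;> ring

variable {ρAB}

lemma condOp_posSemidef (hρ : ρAB.PosSemidef) {P : Matrix (Fin 2) (Fin 2) ℂ}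
    (hP : P.PosSemidef) : (condOp ρAB P).PosSemidef := by
  open scoped MatrixOrder in
  obtain ⟨A, rfl⟩ := CStarAlgebra.nonneg_iff_eq_star_mul_self.mp hP.nonneg
  rw [star_eq_conjTranspose, condOp_conjTranspose_mul_self]
  exact posSemidef_sum _ fun k _ => hρ.mul_mul_conjTranspose_same _

lemma ofReal_condProb (hρ : ρAB.PosSemidef) {P : Matrix (Fin 2) (Fin 2) ℂ}
    (hP : P.PosSemidef) : (condProb ρAB P : ℂ) = (condOp ρAB P).trace := by
  obtain ⟨-, him⟩ := RCLike.nonneg_iff.mp (condOp_posSemidef hρ hP).trace_nonneg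
  exact Complex.ext (by simp [condProb_eq_re_trace_condOp]) (by simpa using him.symm)

lemma condProb_nonneg (hρ : ρAB.PosSemidef) {P : Matrix (Fin 2) (Fin 2) ℂ}
    (hP : P.PosSemidef) : 0 ≤ condProb ρAB P := by
  simpa [condProb_eq_re_trace_condOp] using
    (RCLike.nonneg_iff.mp (condOp_posSemidef hρ hP).trace_nonneg).1

lemma condProb_smul_add_smul (a b : ℝ) (P Q : Matrix (Fin 2) (Fin 2) ℂ) :
    condProb ρAB ((a : ℂ) • P + (b : ℂ) • Q) = a * condProb ρAB P + b * condProb ρAB Q := by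
  simp only [condProb_eq_re_trace_condOp, condOp_add, condOp_smul, trace_add, trace_smul,
    smul_eq_mul, Complex.add_re, Complex.re_ofReal_mul]

variable (ρAB) in
noncomputable def condState (P : Matrix (Fin 2) (Fin 2) ℂ) : Matrix (Fin 2) (Fin 2) ℂ :=
  ((condProb ρAB P : ℝ) : ℂ)⁻¹ • condOp ρAB P

lemma condState_def (P : Matrix (Fin 2) (Fin 2) ℂ) :
    condState ρAB P = ((condProb ρAB P : ℝ) : ℂ)⁻¹ • condOp ρAB P := rfl

lemma condState_mem_qubitStates (hρ : ρAB.PosSemidef) {P : Matrix (Fin 2) (Fin 2) ℂ}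
    (hP : P.PosSemidef) (hp : condProb ρAB P ≠ 0) : condState ρAB P ∈ qubitStates := by
  refine ⟨?_, ?_⟩
  · rw [condState, ← Complex.ofReal_inv, Complex.coe_smul]
    exact (condOp_posSemidef hρ hP).smul (inv_nonneg.2 (condProb_nonneg hρ hP))
  · rw [condState, trace_smul, ← ofReal_condProb hρ hP, smul_eq_mul,
      inv_mul_cancel₀ (Complex.ofReal_ne_zero.2 hp)]

lemma condOp_eq_smul_condState {P : Matrix (Fin 2) (Fin 2) ℂ} (hp : condProb ρAB P ≠ 0) :
    condOp ρAB P = (condProb ρAB P : ℂ) • condState ρAB P := by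
  rw [condState, smul_smul, mul_inv_cancel₀ (Complex.ofReal_ne_zero.2 hp), one_smul]

lemma condState_smul_add_smul {lam : ℝ} {P Q : Matrix (Fin 2) (Fin 2) ℂ}
    (hP : condProb ρAB P ≠ 0) (hQ : condProb ρAB Q ≠ 0)
    (hmix : condProb ρAB ((lam : ℂ) • P + ((1 - lam : ℝ) : ℂ) • Q) ≠ 0) :
    let μ := lam * condProb ρAB P / condProb ρAB ((lam : ℂ) • P + ((1 - lam : ℝ) : ℂ) • Q)
    condState ρAB ((lam : ℂ) • P + ((1 - lam : ℝ) : ℂ) • Q) =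
      (μ : ℂ) • condState ρAB P + ((1 - μ : ℝ) : ℂ) • condState ρAB Q := by
  intro μ
  have hp := condProb_smul_add_smul (ρAB := ρAB) lam (1 - lam) P Q
  have hμ : (condProb ρAB ((lam : ℂ) • P + ((1 - lam : ℝ) : ℂ) • Q))⁻¹ * lam *
      condProb ρAB P = μ := by
    simp only [μ]; field_simp
  have hμ' : (condProb ρAB ((lam : ℂ) • P + ((1 - lam : ℝ) : ℂ) • Q))⁻¹ * (1 - lam) *
      condProb ρAB Q = 1 - μ := by
    simp only [μ]; field_simp; linear_combination -hp
  rw [condState_def, condOp_add, condOp_smul, condOp_smul, condOp_eq_smul_condState hP,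
    condOp_eq_smul_condState hQ, smul_add, smul_smul, smul_smul, smul_smul, smul_smul]
  congr 2
  · exact_mod_cast hμ
  · exact_mod_cast hμ'

end ConditionalStates

namespace Matrix

variable {ρ : Matrix (Fin 2) (Fin 2) ℂ}

/-- For `ρ = (1 + r_x σ_x + r_y σ_y + r_z σ_z) / 2` this is `(r_z, r_x - i r_y)`, whose norm is the
length of the Bloch vector `r`. -/
def blochVector : Matrix (Fin 2) (Fin 2) ℂ →ₗ[ℝ] EuclideanSpace ℂ (Fin 2) where
  toFun ρ := !₂[ρ 0 0 - ρ 1 1, 2 * ρ 0 1]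
  map_add' ρ σ := by ext i; fin_cases i <;> simp <;> ring
  map_smul' r ρ := by ext i; fin_cases i <;> simp [Complex.real_smul] <;> ring

lemma IsHermitian.eigenvalues_zero_add_eigenvalues_one (hρ : ρ.IsHermitian) :
    hρ.eigenvalues 0 + hρ.eigenvalues 1 = ρ.trace.re := by
  simp [hρ.trace_eq_sum_eigenvalues]

lemma IsHermitian.norm_blochVector (hρ : ρ.IsHermitian) :
    ‖blochVector ρ‖ = |hρ.eigenvalues 0 - hρ.eigenvalues 1| := by
  have him : ∀ i, (ρ i i).im = 0 := fun i => by
    simpa using (congrArg Complex.im (hρ.coe_re_apply_self i)).symm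
  have h10 : ρ 1 0 = star (ρ 0 1) := by rw [← conjTranspose_apply, hρ.eq]
  have htr := hρ.eigenvalues_zero_add_eigenvalues_one
  have hdet : hρ.eigenvalues 0 * hρ.eigenvalues 1 = ρ.det.re := by
    simp [hρ.det_eq_prod_eigenvalues]
  rw [← Real.sqrt_sq_eq_abs, ← Real.sqrt_sq (norm_nonneg _), EuclideanSpace.norm_sq_eq]
  congr 1
  simp only [det_fin_two, h10, trace_fin_two] at htr hdet
  simp [blochVector, Complex.sq_norm, Complex.normSq_apply, him] at htr hdet ⊢
  linear_combination
    -(hρ.eigenvalues 0 + hρ.eigenvalues 1 + (ρ 0 0).re + (ρ 1 1).re) * htr + 4 * hdet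

lemma IsHermitian.vN_eq_binEntropy (hρ : ρ.IsHermitian) (htr : ρ.trace = 1) :
    vN ρ = binEntropy ((1 + ‖blochVector ρ‖) / 2) := by
  have hsum : hρ.eigenvalues 0 + hρ.eigenvalues 1 = 1 := by
    simp [hρ.eigenvalues_zero_add_eigenvalues_one, htr]
  rw [vN, dif_pos hρ, Fin.sum_univ_two, hρ.norm_blochVector, eq_sub_of_add_eq' hsum,
    ← Real.binEntropy_eq_negMulLog_add_negMulLog_one_sub]
  rcases le_total (hρ.eigenvalues 0) (1 - hρ.eigenvalues 0) with h | h
  · rw [abs_of_nonpos (by linarith), ← Real.binEntropy_one_sub]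
    ring_nf
  · rw [abs_of_nonneg (by linarith)]
    ring_nf

lemma PosSemidef.norm_blochVector_le_one (hρ : ρ.PosSemidef) (htr : ρ.trace = 1) :
    ‖blochVector ρ‖ ≤ 1 := by
  have hsum : hρ.1.eigenvalues 0 + hρ.1.eigenvalues 1 = 1 := by
    simp [hρ.1.eigenvalues_zero_add_eigenvalues_one, htr]
  rw [hρ.1.norm_blochVector, abs_le]
  constructor <;> linarith [hρ.eigenvalues_nonneg 0, hρ.eigenvalues_nonneg 1]

end Matrix

lemma convex_qubitStates : Convex ℝ qubitStates := by
  rintro ρ ⟨hρ, htrρ⟩ σ ⟨hσ, htrσ⟩ a b ha hb hab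
  refine ⟨(hρ.smul ha).add (hσ.smul hb), ?_⟩
  rw [trace_add, trace_smul, trace_smul, htrρ, htrσ, ← add_smul, hab, one_smul]

lemma concaveOn_vN : ConcaveOn ℝ qubitStates vN := by
  refine ⟨convex_qubitStates, ?_⟩
  intro ρ hρ σ hσ a b ha hb hab
  obtain ⟨hτ, htrτ⟩ := convex_qubitStates hρ hσ ha hb hab
  have hρ1 := hρ.1.norm_blochVector_le_one hρ.2
  have hσ1 := hσ.1.norm_blochVector_le_one hσ.2
  have hτ0 := norm_nonneg (blochVector (a • ρ + b • σ))
  have hmix0 : 0 ≤ a * ‖blochVector ρ‖ + b * ‖blochVector σ‖ := by positivity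
  have hmix1 : a * ‖blochVector ρ‖ + b * ‖blochVector σ‖ ≤ 1 := by nlinarith
  have htriangle := ((convexOn_norm convex_univ).comp_linearMap blochVector).2
    (Set.mem_univ ρ) (Set.mem_univ σ) ha hb hab
  simp only [Function.comp_apply, smul_eq_mul] at htriangle
  have hconcave := Real.strictConcave_binEntropy.concaveOn.2
    (x := (1 + ‖blochVector ρ‖) / 2) (y := (1 + ‖blochVector σ‖) / 2)
    ⟨by positivity, by linarith⟩ ⟨by positivity, by linarith⟩ ha hb hab
  have hanti := Real.binEntropy_strictAntiOn.antitoneOn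
    (a := (1 + ‖blochVector (a • ρ + b • σ)‖) / 2)
    (b := (1 + (a * ‖blochVector ρ‖ + b * ‖blochVector σ‖)) / 2)
    ⟨by linarith, by linarith⟩ ⟨by linarith, by linarith⟩ (by linarith)
  rw [hρ.1.1.vN_eq_binEntropy hρ.2, hσ.1.1.vN_eq_binEntropy hσ.2, hτ.1.vN_eq_binEntropy htrτ]
  calc _ ≤ _ := hconcave
    _ = binEntropy ((1 + (a * ‖blochVector ρ‖ + b * ‖blochVector σ‖)) / 2) := by
        congr 1; simp only [smul_eq_mul]; linear_combination hab / 2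
    _ ≤ _ := hanti

theorem stmt_7_general (ρAB : Matrix (Fin 2 × Fin 2) (Fin 2 × Fin 2) ℂ)
    (hρ : ρAB.PosSemidef)
    (ω ω1 ω2 : Matrix (Fin 2) (Fin 2) ℂ)
    (hω1 : ω1.PosSemidef) (hω2 : ω2.PosSemidef)
    (lam : ℝ) (hlam : 0 < lam) (hlam' : lam < 1)
    (hconv : ω = (lam : ℂ) • ω1 + ((1 - lam : ℝ) : ℂ) • ω2)
    (hp1 : 0 < condProb ρAB ω1) (hp2 : 0 < condProb ρAB ω2) :
    (∃ μ : ℝ, 0 ≤ μ ∧ μ ≤ 1 ∧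
      ((condProb ρAB ω : ℝ) : ℂ)⁻¹ • condOp ρAB ω =
        (μ : ℂ) • (((condProb ρAB ω1 : ℝ) : ℂ)⁻¹ • condOp ρAB ω1) +
          ((1 - μ : ℝ) : ℂ) • (((condProb ρAB ω2 : ℝ) : ℂ)⁻¹ • condOp ρAB ω2)) ∧
    lam * condProb ρAB ω1 * vN (((condProb ρAB ω1 : ℝ) : ℂ)⁻¹ • condOp ρAB ω1) +
        (1 - lam) * condProb ρAB ω2 * vN (((condProb ρAB ω2 : ℝ) : ℂ)⁻¹ • condOp ρAB ω2) ≤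
      condProb ρAB ω * vN (((condProb ρAB ω : ℝ) : ℂ)⁻¹ • condOp ρAB ω) := by
  simp only [← condState_def]
  have hp : condProb ρAB ω = lam * condProb ρAB ω1 + (1 - lam) * condProb ρAB ω2 := by
    rw [hconv, condProb_smul_add_smul]
  have hp_pos : 0 < condProb ρAB ω := by
    rw [hp]; nlinarith
  set μ := lam * condProb ρAB ω1 / condProb ρAB ω with hμ
  have hμ0 : 0 ≤ μ := by positivity
  have hμ1 : μ ≤ 1 := by
    rw [hμ, div_le_one hp_pos, hp]; nlinarith
  have hstate : condState ρAB ω =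
      (μ : ℂ) • condState ρAB ω1 + ((1 - μ : ℝ) : ℂ) • condState ρAB ω2 := by
    have h := condState_smul_add_smul hp1.ne' hp2.ne' (hconv ▸ hp_pos.ne')
    rwa [← hconv] at h
  refine ⟨⟨μ, hμ0, hμ1, hstate⟩, ?_⟩
  have hconcave := concaveOn_vN.2 (condState_mem_qubitStates hρ hω1 hp1.ne')
    (condState_mem_qubitStates hρ hω2 hp2.ne') hμ0 (sub_nonneg.2 hμ1) (add_sub_cancel μ 1)
  rw [← Complex.coe_smul, ← Complex.coe_smul, ← hstate, smul_eq_mul, smul_eq_mul] at hconcave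
  have hμp : condProb ρAB ω * μ = lam * condProb ρAB ω1 := mul_div_cancel₀ _ hp_pos.ne'
  calc _ = condProb ρAB ω * (μ * vN (condState ρAB ω1) + (1 - μ) * vN (condState ρAB ω2)) := by
        linear_combination (vN (condState ρAB ω2) - vN (condState ρAB ω1)) * hμp
          - vN (condState ρAB ω2) * hp
    _ ≤ _ := by gcongr

theorem stmt_7 (ρAB : Matrix (Fin 2 × Fin 2) (Fin 2 × Fin 2) ℂ)
    (hρ : ρAB.PosSemidef) (htr : ρAB.trace = 1)
    (ω ω1 ω2 : Matrix (Fin 2) (Fin 2) ℂ)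
    (hω : ω.PosSemidef) (hω1 : ω1.PosSemidef) (hω2 : ω2.PosSemidef)
    (hrk : ω.rank = 2) (hrk1 : ω1.rank = 1) (hrk2 : ω2.rank = 1)
    (lam : ℝ) (hlam : 0 < lam) (hlam' : lam < 1)
    (hconv : ω = (lam : ℂ) • ω1 + ((1 - lam : ℝ) : ℂ) • ω2)
    (hp1 : 0 < condProb ρAB ω1) (hp2 : 0 < condProb ρAB ω2) :
    (∃ μ : ℝ, 0 ≤ μ ∧ μ ≤ 1 ∧
      ((condProb ρAB ω : ℝ) : ℂ)⁻¹ • condOp ρAB ω =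
        (μ : ℂ) • (((condProb ρAB ω1 : ℝ) : ℂ)⁻¹ • condOp ρAB ω1) +
          ((1 - μ : ℝ) : ℂ) • (((condProb ρAB ω2 : ℝ) : ℂ)⁻¹ • condOp ρAB ω2)) ∧
    lam * condProb ρAB ω1 * vN (((condProb ρAB ω1 : ℝ) : ℂ)⁻¹ • condOp ρAB ω1) +
        (1 - lam) * condProb ρAB ω2 * vN (((condProb ρAB ω2 : ℝ) : ℂ)⁻¹ • condOp ρAB ω2) ≤
      condProb ρAB ω * vN (((condProb ρAB ω : ℝ) : ℂ)⁻¹ • condOp ρAB ω) :=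
  stmt_7_general ρAB hρ ω ω1 ω2 hω1 hω2 lam hlam hlam' hconv hp1 hp2
end

section
/- For fixed z_c ∈ [0,1), the maximum of the volume fraction a_x·a_y·a_z (relative to the unit ball, i.e., maximizing a_x a_y a_z) subject to the separability constraint (1-a_z)² - z_c² ≥ (a_x+a_y)² with a_x, a_y, a_z ≥ 0, is attained at a_x = a_y = √((2-√(1+3z_c²))(1+√(1+3z_c²)))/(3√2) and a_z = (2-√(1+3z_c²))/3, and the maximal fractional volume equals V(z_c) = (1/54)(2-√(1+3z_c²))²(1+√(1+3z_c²)). -/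
/-!
By AM–GM, `a_x a_y ≤ (a_x + a_y)² / 4`, so for fixed `a_z` the volume is at most
`a_z ((1 - a_z)² - z_c²) / 4`, attained when `a_x = a_y` and the separability constraint is tight.
Writing `s = √(1 + 3 z_c²)`, i.e. `3 z_c² = s² - 1`, the gap between `V(z_c)` and this cubic in
`a_z` factors as `(a_z - (2 - s)/3)² ((2 + 2s)/3 - a_z) / 4`, which is nonnegative for `a_z ≤ 1`.
-/

open Real

/-- The largest volume fraction `a_x a_y a_z` allowed by separability at a fixed `a_z`,
where `c = z_c²`. -/
noncomputable def maxVolumeAt (c a : ℝ) : ℝ := a * ((1 - a) ^ 2 - c) / 4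

lemma mul_mul_le_maxVolumeAt {ax ay az zc : ℝ} (haz : 0 ≤ az)
    (hsep : (ax + ay) ^ 2 ≤ (1 - az) ^ 2 - zc ^ 2) :
    ax * ay * az ≤ maxVolumeAt (zc ^ 2) az := by
  have hamgm : 4 * ax * ay ≤ (1 - az) ^ 2 - zc ^ 2 := (four_mul_le_sq_add ax ay).trans hsep
  unfold maxVolumeAt
  nlinarith

lemma maxVolumeAt_sub_eq {a c s : ℝ} (hs : s ^ 2 = 1 + 3 * c) :
    (2 - s) ^ 2 * (1 + s) / 54 - maxVolumeAt c a
      = (a - (2 - s) / 3) ^ 2 * ((2 + 2 * s) / 3 - a) / 4 := by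
  unfold maxVolumeAt
  linear_combination (-a / 12) * hs

lemma maxVolumeAt_le {a c s : ℝ} (hs : s ^ 2 = 1 + 3 * c) (ha : a ≤ (2 + 2 * s) / 3) :
    maxVolumeAt c a ≤ (2 - s) ^ 2 * (1 + s) / 54 := by
  rw [← sub_nonneg, maxVolumeAt_sub_eq hs]
  exact div_nonneg (mul_nonneg (sq_nonneg _) (by linarith)) (by norm_num)

theorem stmt_14 (zc : ℝ) (hzc : zc ∈ Set.Ico (0 : ℝ) 1) :
    let s := Real.sqrt (1 + 3 * zc ^ 2)
    let axy := Real.sqrt ((2 - s) * (1 + s)) / (3 * Real.sqrt 2)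
    let azv := (2 - s) / 3
    (0 ≤ axy ∧ 0 ≤ azv ∧ azv ≤ 1 ∧ (axy + axy) ^ 2 ≤ (1 - azv) ^ 2 - zc ^ 2) ∧
    axy * axy * azv = (1 / 54) * (2 - s) ^ 2 * (1 + s) ∧
    (∀ ax ay az : ℝ, 0 ≤ ax → 0 ≤ ay → 0 ≤ az → az ≤ 1 →
      (ax + ay) ^ 2 ≤ (1 - az) ^ 2 - zc ^ 2 →
      ax * ay * az ≤ (1 / 54) * (2 - s) ^ 2 * (1 + s)) := by
  intro s axy azv
  have hs : s ^ 2 = 1 + 3 * zc ^ 2 := sq_sqrt (by positivity)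
  have hs0 : 0 ≤ s := sqrt_nonneg _
  have hs1 : 1 ≤ s := by nlinarith
  have hs2 : s ≤ 2 := by nlinarith [hzc.1, hzc.2]
  have haxy : axy ^ 2 = (2 - s) * (1 + s) / 18 := by
    rw [div_pow, mul_pow, sq_sqrt (by nlinarith), sq_sqrt zero_le_two]
    ring
  refine ⟨⟨by positivity, show 0 ≤ (2 - s) / 3 by linarith, show (2 - s) / 3 ≤ 1 by linarith,
    le_of_eq ?_⟩, ?_, ?_⟩
  · linear_combination 4 * haxy - hs / 3
  · linear_combination azv * haxy
  · intro ax ay az _ _ haz haz1 hsep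
    calc ax * ay * az ≤ maxVolumeAt (zc ^ 2) az := mul_mul_le_maxVolumeAt haz hsep
      _ ≤ (2 - s) ^ 2 * (1 + s) / 54 := maxVolumeAt_le hs (by linarith)
      _ = 1 / 54 * (2 - s) ^ 2 * (1 + s) := by ring
end

section
/- The eigenvalues of the circular-state density matrix ρ(γ₁,γ₂;θ) are (1/4)(1 + εγ₁ ± √((1+εγ₁)²sin²θ + (γ₁+εγ₂)²cos²θ)) for ε ∈ {+1,-1}. -/
/-!
ρ is an X-state: its entries vanish off the diagonal and the anti-diagonal, so it splits into the
symmetric 2×2 blocks on the coordinates {0, 3} and {1, 2}. The characteristic polynomial of an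
X-state is the product of those of its blocks, and the block `[[p + q, r], [r, p - q]]` has
characteristic polynomial `(x - p)² - (q² + r²)`, with roots `p ± √(q² + r²)`.
-/

open Matrix

theorem Matrix.det_xState {R : Type*} [CommRing R] (a b c d e f g h : R) :
    det !![a, 0, 0, b; 0, c, d, 0; 0, e, f, 0; g, 0, 0, h] = (a * h - b * g) * (c * f - d * e) := by
  simp [det_succ_row_zero, Fin.sum_univ_succ, Fin.succAbove]
  ring

theorem sub_sq_sub_eq_zero_iff {a A x : ℝ} (hA : 0 ≤ A) :
    (x - a) ^ 2 - A = 0 ↔ x = a + √A ∨ x = a - √A := by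
  have hfactor : (x - a) ^ 2 - A = (x - (a + √A)) * (x - (a - √A)) := by
    linear_combination Real.sq_sqrt hA
  rw [hfactor, mul_eq_zero, sub_eq_zero, sub_eq_zero]

theorem spectrum_symmetric_xState (p₁ q₁ r₁ p₂ q₂ r₂ : ℝ) :
    spectrum ℝ !![p₁ + q₁, 0, 0, r₁; 0, p₂ - q₂, r₂, 0; 0, r₂, p₂ + q₂, 0; r₁, 0, 0, p₁ - q₁] =
      {p₁ + √(q₁ ^ 2 + r₁ ^ 2), p₁ - √(q₁ ^ 2 + r₁ ^ 2),
        p₂ + √(q₂ ^ 2 + r₂ ^ 2), p₂ - √(q₂ ^ 2 + r₂ ^ 2)} := by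
  ext x
  have hscalar : scalar (Fin 4) x - !![p₁ + q₁, 0, 0, r₁; 0, p₂ - q₂, r₂, 0; 0, r₂, p₂ + q₂, 0;
      r₁, 0, 0, p₁ - q₁] = !![x - (p₁ + q₁), 0, 0, -r₁; 0, x - (p₂ - q₂), -r₂, 0;
      0, -r₂, x - (p₂ + q₂), 0; -r₁, 0, 0, x - (p₁ - q₁)] := by
    ext i j; fin_cases i <;> fin_cases j <;> simp
  have hblock (p q r : ℝ) :
      (x - (p + q)) * (x - (p - q)) - -r * -r = (x - p) ^ 2 - (q ^ 2 + r ^ 2) := by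
    ring
  rw [mem_spectrum_iff_isRoot_charpoly, Polynomial.IsRoot, eval_charpoly, hscalar,
    det_xState, hblock, mul_comm (x - (p₂ - q₂)), hblock, mul_eq_zero,
    sub_sq_sub_eq_zero_iff (by positivity), sub_sq_sub_eq_zero_iff (by positivity)]
  simp only [Set.mem_insert_iff, Set.mem_singleton_iff, or_assoc]

theorem stmt_17_general (γ1 γ2 θ : ℝ) :
    spectrum ℝ
        ((1 / 4 : ℝ) • !![(1 + γ1) * (1 + Real.sin θ), 0, 0, (γ1 + γ2) * Real.cos θ;
            0, (1 - γ1) * (1 - Real.sin θ), (γ1 - γ2) * Real.cos θ, 0;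
            0, (γ1 - γ2) * Real.cos θ, (1 - γ1) * (1 + Real.sin θ), 0;
            (γ1 + γ2) * Real.cos θ, 0, 0,
              (1 + γ1) * (1 - Real.sin θ)] : Matrix (Fin 4) (Fin 4) ℝ) =
      {(1 + γ1 + Real.sqrt ((1 + γ1) ^ 2 * Real.sin θ ^ 2 + (γ1 + γ2) ^ 2 * Real.cos θ ^ 2)) / 4,
       (1 + γ1 - Real.sqrt ((1 + γ1) ^ 2 * Real.sin θ ^ 2 + (γ1 + γ2) ^ 2 * Real.cos θ ^ 2)) / 4,
       (1 - γ1 + Real.sqrt ((1 - γ1) ^ 2 * Real.sin θ ^ 2 + (γ1 - γ2) ^ 2 * Real.cos θ ^ 2)) / 4,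
       (1 - γ1 - Real.sqrt ((1 - γ1) ^ 2 * Real.sin θ ^ 2 + (γ1 - γ2) ^ 2 * Real.cos θ ^ 2)) / 4} := by
  have hsqrt (u v : ℝ) : √((u / 4) ^ 2 + (v / 4) ^ 2) = √(u ^ 2 + v ^ 2) / 4 := by
    rw [div_pow, div_pow, ← add_div, Real.sqrt_div' _ (by positivity), Real.sqrt_sq (by norm_num)]
  convert spectrum_symmetric_xState
    ((1 + γ1) / 4) ((1 + γ1) * Real.sin θ / 4) ((γ1 + γ2) * Real.cos θ / 4)
    ((1 - γ1) / 4) ((1 - γ1) * Real.sin θ / 4) ((γ1 - γ2) * Real.cos θ / 4) using 1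
  · congr 1; ext i j; fin_cases i <;> fin_cases j <;> simp <;> ring
  · simp only [hsqrt, mul_pow, add_div, sub_div]

theorem stmt_17 (γ1 γ2 θ : ℝ) (h12 : |γ2| ≤ γ1) (hcp : γ1 + |γ1 - γ2| ≤ 1) :
    spectrum ℝ
        ((1 / 4 : ℝ) • !![(1 + γ1) * (1 + Real.sin θ), 0, 0, (γ1 + γ2) * Real.cos θ;
            0, (1 - γ1) * (1 - Real.sin θ), (γ1 - γ2) * Real.cos θ, 0;
            0, (γ1 - γ2) * Real.cos θ, (1 - γ1) * (1 + Real.sin θ), 0;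
            (γ1 + γ2) * Real.cos θ, 0, 0,
              (1 + γ1) * (1 - Real.sin θ)] : Matrix (Fin 4) (Fin 4) ℝ) =
      {(1 + γ1 + Real.sqrt ((1 + γ1) ^ 2 * Real.sin θ ^ 2 + (γ1 + γ2) ^ 2 * Real.cos θ ^ 2)) / 4,
       (1 + γ1 - Real.sqrt ((1 + γ1) ^ 2 * Real.sin θ ^ 2 + (γ1 + γ2) ^ 2 * Real.cos θ ^ 2)) / 4,
       (1 - γ1 + Real.sqrt ((1 - γ1) ^ 2 * Real.sin θ ^ 2 + (γ1 - γ2) ^ 2 * Real.cos θ ^ 2)) / 4,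
       (1 - γ1 - Real.sqrt ((1 - γ1) ^ 2 * Real.sin θ ^ 2 + (γ1 - γ2) ^ 2 * Real.cos θ ^ 2)) / 4} :=
  stmt_17_general γ1 γ2 θ
end

section
/- Under the boost Mueller matrix M₀(μ) = cosh(μ)·[[1,0,0,tanhμ],[0,1/coshμ,0,0],[0,0,1/coshμ,0],[tanhμ,0,0,1]], the product of an X-state Mueller matrix M (with m_03 = 0, entries m_11, m_22, m_33 on the diagonal and m_30 at position (3,0)) with M₀(μ), after rescaling by 1/coshμ, yields a Mueller matrix whose correlation-ellipsoid parameters a_x, a_y, a_z, z_c are identical to those of M, while z_I = m_30 changes to m_30 + m_33·tanhμ; as tanhμ ranges over (-1,1), z_I ranges over the open interval (z_c - a_z, z_c + a_z). -/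
/-!
The rescaled product `M M₀(μ)` acts on the pair `(m₃₃, m₃₀)` as the Lorentz boost
`(p, q) ↦ (p + q t, q + p t)` with `t = tanh μ`, and the ellipsoid parameters `a_z`, `z_c` are
obtained by applying the inverse boost, so they do not change; `a_x`, `a_y` survive because
`√(1 - tanh² μ) = 1 / cosh μ`. Since `tanh` maps `ℝ` onto `(-1, 1)`, the affine image
`z_I = m₃₀ + m₃₃ tanh μ` sweeps out `(m₃₀ - m₃₃, m₃₀ + m₃₃)`.
-/

open Set

namespace Real

theorem one_sub_tanh_sq (x : ℝ) : 1 - tanh x ^ 2 = (cosh x ^ 2)⁻¹ := by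
  have hc : cosh x ≠ 0 := (cosh_pos x).ne'
  rw [tanh_eq_sinh_div_cosh, div_pow, cosh_sq']
  field_simp
  ring

theorem sqrt_one_sub_tanh_sq (x : ℝ) : √(1 - tanh x ^ 2) = (cosh x)⁻¹ := by
  rw [one_sub_tanh_sq, sqrt_inv, sqrt_sq (cosh_pos x).le]

theorem abs_div_cosh_div_sqrt_one_sub_tanh_sq (a x : ℝ) :
    |a / cosh x| / √(1 - tanh x ^ 2) = |a| := by
  rw [sqrt_one_sub_tanh_sq, abs_div, abs_of_pos (cosh_pos x), div_inv_eq_mul,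
    div_mul_cancel₀ _ (cosh_pos x).ne']

theorem range_tanh : range tanh = Ioo (-1) 1 := by
  rw [← image_univ]
  exact tanh_bijOn.image_eq

theorem range_const_add_mul_tanh {a b : ℝ} (hb : 0 < b) :
    range (fun x => a + b * tanh x) = Ioo (a - b) (a + b) := by
  have hcomp : (fun x => a + b * tanh x) = (b * · + a) ∘ tanh := by
    ext x
    exact add_comm _ _
  rw [hcomp, range_comp, range_tanh, image_affine_Ioo hb]
  congr 1 <;> ring

end Real

theorem add_mul_sub_mul_add_mul_div_one_sub_sq {K : Type*} [Field K] {t : K}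
    (ht : 1 - t ^ 2 ≠ 0) (p q : K) :
    ((p + q * t) - t * (q + p * t)) / (1 - t ^ 2) = p := by
  rw [div_eq_iff ht]
  ring

theorem stmt_18 (m11 m22 m30 m33 : ℝ) (h33 : 0 < m33) :
    (∀ μ : ℝ,
        |m11 / Real.cosh μ| / Real.sqrt (1 - Real.tanh μ ^ 2) = |m11| ∧
        |m22 / Real.cosh μ| / Real.sqrt (1 - Real.tanh μ ^ 2) = |m22| ∧
        |(m33 + m30 * Real.tanh μ) - Real.tanh μ * (m30 + m33 * Real.tanh μ)| /
            (1 - Real.tanh μ ^ 2) = m33 ∧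
        ((m30 + m33 * Real.tanh μ) - Real.tanh μ * (m33 + m30 * Real.tanh μ)) /
            (1 - Real.tanh μ ^ 2) = m30) ∧
    Set.range (fun μ : ℝ => m30 + m33 * Real.tanh μ) =
      Set.Ioo (m30 - m33) (m30 + m33) := by
  refine ⟨fun μ => ?_, Real.range_const_add_mul_tanh h33⟩
  have hpos : 0 < 1 - Real.tanh μ ^ 2 := sub_pos.2 (Real.tanh_sq_lt_one μ)
  refine ⟨Real.abs_div_cosh_div_sqrt_one_sub_tanh_sq m11 μ,
    Real.abs_div_cosh_div_sqrt_one_sub_tanh_sq m22 μ,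
    ?_, add_mul_sub_mul_add_mul_div_one_sub_sq hpos.ne' m30 m33⟩
  rw [← abs_of_pos hpos, ← abs_div,
    add_mul_sub_mul_add_mul_div_one_sub_sq hpos.ne', abs_of_pos h33]
end
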